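/- Let (X,Y) have the Lancaster density with coefficients ρₙ = λn for 1 ≤ n ≤ N (N ≥ 2) and ρₙ = 0 for n > N, where 0 < λ ≤ (Σ_{n=1}^N n cₙ dₙ)^{-1}. Then R(X,Y) = λN > λ = |ρ(X,Y)| > 0. -/

import Mathlib

/-!
Since `ρₙ = 0` beyond `N`, the joint density is `f₁ f₂ (1 + ∑_{k ≤ N} ρₖ φₖ ψₖ)`; as `φₖ, ψₖ`
have mean zero for `k ≥ 1`, the marginals are `f₁, f₂` and
`E[g₁(X) g₂(Y)] = E g₁(X) · E g₂(Y) + ∑ₖ ρₖ ⟨g₁, φₖ⟩ ⟨g₂, ψₖ⟩`.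
For centred `g₁, g₂` the covariance is `∑ₖ ρₖ aₖ bₖ ≤ (max ρₖ) ‖a‖ ‖b‖`, and Bessel's inequality
bounds `‖a‖, ‖b‖` by the standard deviations, so `R ≤ max ρₖ = λN`, attained by `(φ_N, ψ_N)`.
As `X - EX` and `Y - EY` are positive multiples of `φ₁(X)` and `ψ₁(Y)`, `ρ(X, Y) = ρ₁ = λ`.
The bound on `λ` is what makes the density nonnegative.
-/

open MeasureTheory ProbabilityTheory Real
open scoped ENNReal

noncomputable def covar {Ω : Type*} [MeasurableSpace Ω] (μ : Measure Ω) (X Y : Ω → ℝ) : ℝ :=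
  ∫ ω, (X ω - ∫ a, X a ∂μ) * (Y ω - ∫ a, Y a ∂μ) ∂μ

noncomputable def pearson {Ω : Type*} [MeasurableSpace Ω] (μ : Measure Ω) (X Y : Ω → ℝ) : ℝ :=
  covar μ X Y / (Real.sqrt (variance X μ) * Real.sqrt (variance Y μ))

noncomputable def maxCorr {Ω : Type*} [MeasurableSpace Ω] (μ : Measure Ω) (X Y : Ω → ℝ) : ℝ :=
  sSup { r : ℝ | ∃ g₁ g₂ : ℝ → ℝ, Measurable g₁ ∧ Measurable g₂ ∧
    MemLp (g₁ ∘ X) 2 μ ∧ MemLp (g₂ ∘ Y) 2 μ ∧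
    0 < variance (g₁ ∘ X) μ ∧ 0 < variance (g₂ ∘ Y) μ ∧
    r = pearson μ (g₁ ∘ X) (g₂ ∘ Y) }

/-- `g` is a probability density on `ℝ` supported in `[a, b]`. -/
def IsDensityOn (g : ℝ → ℝ) (a b : ℝ) : Prop :=
  (∀ x, 0 ≤ g x) ∧ (∀ x, x ∉ Set.Icc a b → g x = 0) ∧ (∫ x, g x = 1)

/-- `φ` is the orthonormal polynomial system of the density `g`:
degree `n`, positive leading coefficients, orthonormal in `L²(g dx)`. -/
def OrthonormalPolys (g : ℝ → ℝ) (φ : ℕ → Polynomial ℝ) : Prop :=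
  (∀ n, (φ n).natDegree = n) ∧ (∀ n, 0 < (φ n).leadingCoeff) ∧
  (∀ m n, ∫ x, (φ m).eval x * (φ n).eval x * g x = if m = n then 1 else 0)

/-- The Lancaster density `f(x,y) = f₁(x) f₂(y) (1 + Σₙ≥₁ ρₙ φₙ(x) ψₙ(y))`. -/
noncomputable def lancaster (f₁ f₂ : ℝ → ℝ) (φ ψ : ℕ → Polynomial ℝ) (ρ : ℕ → ℝ)
    (x y : ℝ) : ℝ :=
  f₁ x * f₂ y * (1 + ∑' n : ℕ, ρ (n + 1) * (φ (n + 1)).eval x * (ψ (n + 1)).eval y)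

noncomputable def densityMeasure (f : ℝ → ℝ) : Measure ℝ :=
  volume.withDensity fun x => ENNReal.ofReal (f x)

theorem integral_densityMeasure {f : ℝ → ℝ} (hm : Measurable f) (h0 : ∀ x, 0 ≤ f x)
    (g : ℝ → ℝ) : ∫ x, g x ∂densityMeasure f = ∫ x, g x * f x := by
  rw [densityMeasure, integral_withDensity_eq_integral_toReal_smul hm.ennreal_ofReal
    (ae_of_all _ fun _ => ENNReal.ofReal_lt_top)]
  simp_rw [ENNReal.toReal_ofReal (h0 _), smul_eq_mul, mul_comm]

theorem integrable_densityMeasure_iff {f : ℝ → ℝ} (hm : Measurable f) (h0 : ∀ x, 0 ≤ f x)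
    {g : ℝ → ℝ} : Integrable g (densityMeasure f) ↔ Integrable (fun x => g x * f x) := by
  rw [densityMeasure, integrable_withDensity_iff hm.ennreal_ofReal
    (ae_of_all _ fun _ => ENNReal.ofReal_lt_top)]
  simp_rw [ENNReal.toReal_ofReal (h0 _)]

namespace IsDensityOn

variable {f : ℝ → ℝ} {a b : ℝ}

theorem integrable (hf : IsDensityOn f a b) : Integrable f := by
  by_contra h
  simpa [integral_undef h] using hf.2.2

theorem isProbabilityMeasure (hf : IsDensityOn f a b) :
    IsProbabilityMeasure (densityMeasure f) := by
  constructor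
  rw [densityMeasure, withDensity_apply _ MeasurableSet.univ, Measure.restrict_univ,
    ← ofReal_integral_eq_lintegral_ofReal hf.integrable (ae_of_all _ hf.1), hf.2.2,
    ENNReal.ofReal_one]

theorem ae_mem_Icc (hf : IsDensityOn f a b) : ∀ᵐ x ∂densityMeasure f, x ∈ Set.Icc a b := by
  change densityMeasure f (Set.Icc a b)ᶜ = 0
  rw [densityMeasure, withDensity_apply _ measurableSet_Icc.compl,
    setLIntegral_congr_fun measurableSet_Icc.compl
      fun x hx => by rw [hf.2.1 x hx, ENNReal.ofReal_zero]]
  exact lintegral_zero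

end IsDensityOn

theorem memLp_of_ae_mem_Icc {ν : Measure ℝ} [IsFiniteMeasure ν] {a b : ℝ}
    (hν : ∀ᵐ x ∂ν, x ∈ Set.Icc a b) {g : ℝ → ℝ} (hg : Continuous g) (p : ℝ≥0∞) :
    MemLp g p ν := by
  obtain ⟨C, hC⟩ := isCompact_Icc.exists_bound_of_continuousOn hg.continuousOn
  exact MemLp.of_bound hg.aestronglyMeasurable C (hν.mono hC)

theorem abs_eval_le_sSup_image (p : Polynomial ℝ) {a b x : ℝ} (hx : x ∈ Set.Icc a b) :
    |p.eval x| ≤ sSup ((fun x => |p.eval x|) '' Set.Icc a b) :=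
  le_csSup (isCompact_Icc.image (by fun_prop)).bddAbove (Set.mem_image_of_mem _ hx)

def IsOrthonormalL2 {α : Type*} [MeasurableSpace α] (ν : Measure α) (e : ℕ → α → ℝ) : Prop :=
  (∀ k, MemLp (e k) 2 ν) ∧ ∀ j k, ∫ x, e j x * e k x ∂ν = if j = k then 1 else 0

theorem IsOrthonormalL2.sum_sq_integral_mul_le {α : Type*} [MeasurableSpace α] {ν : Measure α}
    {e : ℕ → α → ℝ} (he : IsOrthonormalL2 ν e) {u : α → ℝ} (hu : MemLp u 2 ν) (s : Finset ℕ) :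
    ∑ k ∈ s, (∫ x, u x * e k x ∂ν) ^ 2 ≤ ∫ x, u x ^ 2 ∂ν := by
  have inner_toLp : ∀ {v w : α → ℝ} (hv : MemLp v 2 ν) (hw : MemLp w 2 ν),
      inner ℝ (hv.toLp v) (hw.toLp w) = ∫ x, v x * w x ∂ν := fun hv hw => by
    rw [L2.inner_def]
    refine integral_congr_ae ?_
    filter_upwards [hv.coeFn_toLp, hw.coeFn_toLp] with x hvx hwx
    rw [hvx, hwx, real_inner_eq_re_inner, RCLike.inner_apply, conj_trivial]
    simp [mul_comm]
  have horth : Orthonormal ℝ fun k => (he.1 k).toLp (e k) := by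
    rw [orthonormal_iff_ite]
    intro j k
    rw [inner_toLp, he.2]
  have h := horth.sum_inner_products_le (hu.toLp u) (s := s)
  rw [← real_inner_self_eq_norm_sq, inner_toLp] at h
  simp only [inner_toLp, Real.norm_eq_abs, sq_abs] at h
  simpa only [mul_comm (e _ _), sq] using h

namespace OrthonormalPolys

variable {f : ℝ → ℝ} {φ : ℕ → Polynomial ℝ} {a b : ℝ}

theorem integral_mul_densityMeasure (hφ : OrthonormalPolys f φ) (hf : IsDensityOn f a b)
    (hm : Measurable f) (m n : ℕ) :
    ∫ x, (φ m).eval x * (φ n).eval x ∂densityMeasure f = if m = n then 1 else 0 := by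
  rw [integral_densityMeasure hm hf.1]
  exact hφ.2.2 m n

theorem isOrthonormalL2 (hφ : OrthonormalPolys f φ) (hf : IsDensityOn f a b)
    (hm : Measurable f) : IsOrthonormalL2 (densityMeasure f) fun n x => (φ n).eval x := by
  have : IsProbabilityMeasure (densityMeasure f) := hf.isProbabilityMeasure
  exact ⟨fun n => memLp_of_ae_mem_Icc hf.ae_mem_Icc (φ n).continuous 2,
    hφ.integral_mul_densityMeasure hf hm⟩


theorem eval_zero_eq_one (hφ : OrthonormalPolys f φ) (hf : IsDensityOn f a b) (x : ℝ) :
    (φ 0).eval x = 1 := by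
  set c := (φ 0).coeff 0
  have hC : φ 0 = Polynomial.C c := Polynomial.eq_C_of_natDegree_eq_zero (hφ.1 0)
  have hc : 0 < c := by simpa [Polynomial.leadingCoeff, hφ.1 0] using hφ.2.1 0
  have hcc : c * c = 1 := by
    have h := hφ.2.2 0 0
    simp_rw [hC, Polynomial.eval_C, mul_assoc, integral_const_mul, hf.2.2] at h
    simpa using h
  rw [hC, Polynomial.eval_C]
  nlinarith

theorem integral_eval_eq_zero (hφ : OrthonormalPolys f φ) (hf : IsDensityOn f a b)
    (hm : Measurable f) {n : ℕ} (hn : n ≠ 0) : ∫ x, (φ n).eval x ∂densityMeasure f = 0 := by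
  simpa [hφ.eval_zero_eq_one hf, Ne.symm hn] using hφ.integral_mul_densityMeasure hf hm 0 n

theorem integrable_eval_mul (hφ : OrthonormalPolys f φ) (hf : IsDensityOn f a b)
    (hm : Measurable f) (n : ℕ) : Integrable fun x => (φ n).eval x * f x := by
  have : IsProbabilityMeasure (densityMeasure f) := hf.isProbabilityMeasure
  exact (integrable_densityMeasure_iff hm hf.1).1 <|
    ((hφ.isOrthonormalL2 hf hm).1 n).integrable one_le_two

theorem integrable_mul_eval_mul (hφ : OrthonormalPolys f φ) (hf : IsDensityOn f a b)
    (hm : Measurable f) {g : ℝ → ℝ} (hg : MemLp g 2 (densityMeasure f)) (n : ℕ) :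
    Integrable fun x => g x * (φ n).eval x * f x :=
  (integrable_densityMeasure_iff hm hf.1).1 (hg.integrable_mul ((hφ.isOrthonormalL2 hf hm).1 n))

theorem integral_eval_mul_eq_zero (hφ : OrthonormalPolys f φ) (hf : IsDensityOn f a b)
    (hm : Measurable f) {n : ℕ} (hn : n ≠ 0) : ∫ x, (φ n).eval x * f x = 0 := by
  rw [← integral_densityMeasure hm hf.1, hφ.integral_eval_eq_zero hf hm hn]

theorem sub_integral_eq (hφ : OrthonormalPolys f φ) (hf : IsDensityOn f a b)
    (hm : Measurable f) (x : ℝ) :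
    x - ∫ t, t ∂densityMeasure f = (φ 1).leadingCoeff⁻¹ * (φ 1).eval x := by
  have : IsProbabilityMeasure (densityMeasure f) := hf.isProbabilityMeasure
  set ℓ := (φ 1).leadingCoeff
  have hℓ : 0 < ℓ := hφ.2.1 1
  have heval : ∀ t, (φ 1).eval t = ℓ * t + (φ 1).coeff 0 := fun t => by
    conv_lhs => rw [Polynomial.eq_X_add_C_of_natDegree_le_one (hφ.1 1).le]
    simp [ℓ, Polynomial.leadingCoeff, hφ.1 1]
  have hmean : ℓ * (∫ t, t ∂densityMeasure f) + (φ 1).coeff 0 = 0 := by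
    have hid : Integrable (fun t : ℝ => t) (densityMeasure f) :=
      memLp_one_iff_integrable.1 (memLp_of_ae_mem_Icc hf.ae_mem_Icc continuous_id 1)
    rw [← hφ.integral_eval_eq_zero hf hm one_ne_zero]
    simp_rw [heval]
    rw [integral_add (hid.const_mul ℓ) (integrable_const _), integral_const_mul]
    simp
  rw [heval]
  field_simp
  linarith

end OrthonormalPolys

theorem sum_mul_mul_le_mul_sqrt_mul_sqrt {ι : Type*} (s : Finset ι) {ρ : ι → ℝ} {r : ℝ}
    (hr : 0 ≤ r) (hρ : ∀ k ∈ s, |ρ k| ≤ r) (a b : ι → ℝ) :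
    ∑ k ∈ s, ρ k * (a k * b k) ≤ r * (√(∑ k ∈ s, a k ^ 2) * √(∑ k ∈ s, b k ^ 2)) :=
  calc ∑ k ∈ s, ρ k * (a k * b k)
      ≤ ∑ k ∈ s, r * (|a k| * |b k|) := Finset.sum_le_sum fun k hk =>
        calc ρ k * (a k * b k) ≤ |ρ k| * (|a k| * |b k|) := by
              rw [← abs_mul, ← abs_mul]
              exact le_abs_self _
          _ ≤ r * (|a k| * |b k|) := by gcongr; exact hρ k hk
    _ = r * ∑ k ∈ s, |a k| * |b k| := (Finset.mul_sum ..).symm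
    _ ≤ r * (√(∑ k ∈ s, |a k| ^ 2) * √(∑ k ∈ s, |b k| ^ 2)) :=
        mul_le_mul_of_nonneg_left (Real.sum_mul_le_sqrt_mul_sqrt ..) hr
    _ = r * (√(∑ k ∈ s, a k ^ 2) * √(∑ k ∈ s, b k ^ 2)) := by simp only [sq_abs]

theorem variance_eq_sq_of_sub_integral_eq {α : Type*} [MeasurableSpace α] {ν : Measure α}
    {g e : α → ℝ} (hg : AEMeasurable g ν) (he : ∫ x, e x * e x ∂ν = 1) {a : ℝ}
    (hge : ∀ x, g x - ∫ t, g t ∂ν = a * e x) : variance g ν = a ^ 2 := by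
  simp_rw [variance_eq_integral hg, hge, mul_pow, integral_const_mul, sq (e _), he, mul_one]

/-- A joint law of the form `f₁(x) f₂(y) (1 + ∑_{k ∈ s} ρₖ e₁ₖ(x) e₂ₖ(y))` has this property. -/
structure HasLancasterExpansion {Ω : Type*} [MeasurableSpace Ω] (μ : Measure Ω) (X Y : Ω → ℝ)
    (e₁ e₂ : ℕ → ℝ → ℝ) (s : Finset ℕ) (ρ : ℕ → ℝ) : Prop where
  measurable_X : Measurable X
  measurable_Y : Measurable Y
  integral_mul_comp : ∀ g₁ g₂ : ℝ → ℝ, Measurable g₁ → Measurable g₂ →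
    MemLp g₁ 2 (μ.map X) → MemLp g₂ 2 (μ.map Y) →
    ∫ ω, g₁ (X ω) * g₂ (Y ω) ∂μ = (∫ x, g₁ x ∂μ.map X) * (∫ y, g₂ y ∂μ.map Y) +
      ∑ k ∈ s, ρ k * ((∫ x, g₁ x * e₁ k x ∂μ.map X) * ∫ y, g₂ y * e₂ k y ∂μ.map Y)

namespace HasLancasterExpansion

variable {Ω : Type*} [MeasurableSpace Ω] {μ : Measure Ω} [IsProbabilityMeasure μ] {X Y : Ω → ℝ}
  {e₁ e₂ : ℕ → ℝ → ℝ} {s : Finset ℕ} {ρ : ℕ → ℝ} {g₁ g₂ : ℝ → ℝ}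

theorem covar_comp (h : HasLancasterExpansion μ X Y e₁ e₂ s ρ) (hg₁ : Measurable g₁)
    (hg₂ : Measurable g₂) (hq₁ : MemLp g₁ 2 (μ.map X)) (hq₂ : MemLp g₂ 2 (μ.map Y)) :
    covar μ (g₁ ∘ X) (g₂ ∘ Y) = ∑ k ∈ s, ρ k *
      ((∫ x, (g₁ x - ∫ t, g₁ t ∂μ.map X) * e₁ k x ∂μ.map X) *
        ∫ y, (g₂ y - ∫ t, g₂ t ∂μ.map Y) * e₂ k y ∂μ.map Y) := by
  have : IsProbabilityMeasure (μ.map X) :=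
    Measure.isProbabilityMeasure_map h.measurable_X.aemeasurable
  have hmean₁ : ∫ ω, (g₁ ∘ X) ω ∂μ = ∫ t, g₁ t ∂μ.map X :=
    (integral_map h.measurable_X.aemeasurable hg₁.aestronglyMeasurable).symm
  have hmean₂ : ∫ ω, (g₂ ∘ Y) ω ∂μ = ∫ t, g₂ t ∂μ.map Y :=
    (integral_map h.measurable_Y.aemeasurable hg₂.aestronglyMeasurable).symm
  have hcentred : ∫ x, (g₁ x - ∫ t, g₁ t ∂μ.map X) ∂μ.map X = 0 := by
    rw [integral_sub (hq₁.integrable one_le_two) (integrable_const _)]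
    simp
  have hexp := h.integral_mul_comp (fun x => g₁ x - ∫ t, g₁ t ∂μ.map X)
    (fun y => g₂ y - ∫ t, g₂ t ∂μ.map Y) (hg₁.sub_const _) (hg₂.sub_const _)
    (hq₁.sub (memLp_const _)) (hq₂.sub (memLp_const _))
  rw [hcentred, zero_mul, zero_add] at hexp
  rw [covar, hmean₁, hmean₂]
  exact hexp

theorem covar_comp_le (h : HasLancasterExpansion μ X Y e₁ e₂ s ρ)
    (he₁ : IsOrthonormalL2 (μ.map X) e₁) (he₂ : IsOrthonormalL2 (μ.map Y) e₂) {r : ℝ}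
    (hr : 0 ≤ r) (hρ : ∀ k ∈ s, |ρ k| ≤ r) (hg₁ : Measurable g₁) (hg₂ : Measurable g₂)
    (hq₁ : MemLp g₁ 2 (μ.map X)) (hq₂ : MemLp g₂ 2 (μ.map Y)) :
    covar μ (g₁ ∘ X) (g₂ ∘ Y) ≤ r * (√(variance (g₁ ∘ X) μ) * √(variance (g₂ ∘ Y) μ)) := by
  rw [h.covar_comp hg₁ hg₂ hq₁ hq₂,
    ← variance_map hg₁.aemeasurable h.measurable_X.aemeasurable,
    ← variance_map hg₂.aemeasurable h.measurable_Y.aemeasurable,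
    variance_eq_integral hg₁.aemeasurable, variance_eq_integral hg₂.aemeasurable]
  refine (sum_mul_mul_le_mul_sqrt_mul_sqrt s hr hρ _ _).trans ?_
  gcongr
  · exact he₁.sum_sq_integral_mul_le (hq₁.sub (memLp_const _)) s
  · exact he₂.sum_sq_integral_mul_le (hq₂.sub (memLp_const _)) s

theorem pearson_comp_le (h : HasLancasterExpansion μ X Y e₁ e₂ s ρ)
    (he₁ : IsOrthonormalL2 (μ.map X) e₁) (he₂ : IsOrthonormalL2 (μ.map Y) e₂) {r : ℝ}
    (hr : 0 ≤ r) (hρ : ∀ k ∈ s, |ρ k| ≤ r) (hg₁ : Measurable g₁) (hg₂ : Measurable g₂)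
    (hq₁ : MemLp (g₁ ∘ X) 2 μ) (hq₂ : MemLp (g₂ ∘ Y) 2 μ)
    (hv₁ : 0 < variance (g₁ ∘ X) μ) (hv₂ : 0 < variance (g₂ ∘ Y) μ) :
    pearson μ (g₁ ∘ X) (g₂ ∘ Y) ≤ r := by
  rw [pearson, div_le_iff₀ (by positivity)]
  exact h.covar_comp_le he₁ he₂ hr hρ hg₁ hg₂
    ((memLp_map_measure_iff hg₁.aestronglyMeasurable h.measurable_X.aemeasurable).2 hq₁)
    ((memLp_map_measure_iff hg₂.aestronglyMeasurable h.measurable_Y.aemeasurable).2 hq₂)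

theorem pearson_comp_eq (h : HasLancasterExpansion μ X Y e₁ e₂ s ρ)
    (he₁ : IsOrthonormalL2 (μ.map X) e₁) (he₂ : IsOrthonormalL2 (μ.map Y) e₂) {m : ℕ}
    (hm : m ∈ s) (hg₁ : Measurable g₁) (hg₂ : Measurable g₂) {a b : ℝ} (ha : 0 < a) (hb : 0 < b)
    (hge₁ : ∀ x, g₁ x - ∫ t, g₁ t ∂μ.map X = a * e₁ m x)
    (hge₂ : ∀ y, g₂ y - ∫ t, g₂ t ∂μ.map Y = b * e₂ m y) :
    pearson μ (g₁ ∘ X) (g₂ ∘ Y) = ρ m := by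
  have hq₁ : MemLp g₁ 2 (μ.map X) := by
    convert ((he₁.1 m).const_mul a).add (memLp_const (∫ t, g₁ t ∂μ.map X)) using 1
    funext x
    simp [← hge₁ x]
  have hq₂ : MemLp g₂ 2 (μ.map Y) := by
    convert ((he₂.1 m).const_mul b).add (memLp_const (∫ t, g₂ t ∂μ.map Y)) using 1
    funext y
    simp [← hge₂ y]
  have hcovar : covar μ (g₁ ∘ X) (g₂ ∘ Y) = ρ m * (a * b) := by
    simp_rw [h.covar_comp hg₁ hg₂ hq₁ hq₂, hge₁, hge₂, mul_assoc, integral_const_mul, he₁.2,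
      he₂.2]
    rw [Finset.sum_eq_single_of_mem m hm fun k _ hk => by simp [Ne.symm hk]]
    simp only [if_true]
    ring
  have hvar₁ : variance (g₁ ∘ X) μ = a ^ 2 := by
    rw [← variance_map hg₁.aemeasurable h.measurable_X.aemeasurable]
    exact variance_eq_sq_of_sub_integral_eq hg₁.aemeasurable (by simpa using he₁.2 m m) hge₁
  have hvar₂ : variance (g₂ ∘ Y) μ = b ^ 2 := by
    rw [← variance_map hg₂.aemeasurable h.measurable_Y.aemeasurable]
    exact variance_eq_sq_of_sub_integral_eq hg₂.aemeasurable (by simpa using he₂.2 m m) hge₂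
  rw [pearson, hcovar, hvar₁, hvar₂, Real.sqrt_sq ha.le, Real.sqrt_sq hb.le]
  field_simp

theorem maxCorr_eq (h : HasLancasterExpansion μ X Y e₁ e₂ s ρ)
    (he₁ : IsOrthonormalL2 (μ.map X) e₁) (he₂ : IsOrthonormalL2 (μ.map Y) e₂) {r : ℝ}
    (hr : 0 ≤ r) (hρ : ∀ k ∈ s, |ρ k| ≤ r) {m : ℕ} (hm : m ∈ s) (hρm : ρ m = r)
    (hme₁ : Measurable (e₁ m)) (hme₂ : Measurable (e₂ m))
    (hc₁ : ∫ x, e₁ m x ∂μ.map X = 0) (hc₂ : ∫ y, e₂ m y ∂μ.map Y = 0) :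
    maxCorr μ X Y = r := by
  have hge₁ : ∀ x, e₁ m x - ∫ t, e₁ m t ∂μ.map X = 1 * e₁ m x := by simp [hc₁]
  have hge₂ : ∀ y, e₂ m y - ∫ t, e₂ m t ∂μ.map Y = 1 * e₂ m y := by simp [hc₂]
  have hvar₁ : variance (e₁ m ∘ X) μ = 1 := by
    rw [← variance_map hme₁.aemeasurable h.measurable_X.aemeasurable,
      variance_eq_sq_of_sub_integral_eq hme₁.aemeasurable (by simpa using he₁.2 m m) hge₁, one_pow]
  have hvar₂ : variance (e₂ m ∘ Y) μ = 1 := by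
    rw [← variance_map hme₂.aemeasurable h.measurable_Y.aemeasurable,
      variance_eq_sq_of_sub_integral_eq hme₂.aemeasurable (by simpa using he₂.2 m m) hge₂, one_pow]
  refine IsGreatest.csSup_eq ⟨⟨e₁ m, e₂ m, hme₁, hme₂,
    (memLp_map_measure_iff hme₁.aestronglyMeasurable h.measurable_X.aemeasurable).1 (he₁.1 m),
    (memLp_map_measure_iff hme₂.aestronglyMeasurable h.measurable_Y.aemeasurable).1 (he₂.1 m),
    hvar₁ ▸ one_pos, hvar₂ ▸ one_pos,
    (hρm ▸ h.pearson_comp_eq he₁ he₂ hm hme₁ hme₂ one_pos one_pos hge₁ hge₂).symm⟩, ?_⟩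
  rintro _ ⟨g₁, g₂, hg₁, hg₂, hq₁, hq₂, hv₁, hv₂, rfl⟩
  exact h.pearson_comp_le he₁ he₂ hr hρ hg₁ hg₂ hq₁ hq₂ hv₁ hv₂

end HasLancasterExpansion

theorem map_fst_withDensity_ofReal {F : ℝ × ℝ → ℝ} (hF : Measurable F) (h0 : ∀ p, 0 ≤ F p)
    {f : ℝ → ℝ} (hint : ∀ x, Integrable fun y => F (x, y)) (hmarg : ∀ x, ∫ y, F (x, y) = f x) :
    (volume.withDensity fun p => ENNReal.ofReal (F p)).map Prod.fst = densityMeasure f := by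
  ext s hs
  rw [Measure.map_apply measurable_fst hs, withDensity_apply _ (hs.preimage measurable_fst),
    ← Set.prod_univ, Measure.volume_eq_prod, ← Measure.prod_restrict, Measure.restrict_univ,
    lintegral_prod _ hF.ennreal_ofReal.aemeasurable, densityMeasure, withDensity_apply _ hs]
  refine lintegral_congr fun x => ?_
  rw [← ofReal_integral_eq_lintegral_ofReal (hint x) (ae_of_all _ fun y => h0 (x, y)), hmarg x]

theorem map_snd_withDensity_ofReal {F : ℝ × ℝ → ℝ} (hF : Measurable F) (h0 : ∀ p, 0 ≤ F p)
    {f : ℝ → ℝ} (hint : ∀ y, Integrable fun x => F (x, y)) (hmarg : ∀ y, ∫ x, F (x, y) = f y) :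
    (volume.withDensity fun p => ENNReal.ofReal (F p)).map Prod.snd = densityMeasure f := by
  ext s hs
  rw [Measure.map_apply measurable_snd hs, withDensity_apply _ (hs.preimage measurable_snd),
    ← Set.univ_prod, Measure.volume_eq_prod, ← Measure.prod_restrict, Measure.restrict_univ,
    lintegral_prod_symm _ hF.ennreal_ofReal.aemeasurable, densityMeasure, withDensity_apply _ hs]
  refine lintegral_congr fun y => ?_
  rw [← ofReal_integral_eq_lintegral_ofReal (hint y) (ae_of_all _ fun x => h0 (x, y)), hmarg y]

section Lancaster

variable {f₁ f₂ : ℝ → ℝ} {φ ψ : ℕ → Polynomial ℝ} {ρ : ℕ → ℝ} {N : ℕ} {α₁ ω₁ α₂ ω₂ : ℝ}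

theorem lancaster_comm (f₁ f₂ : ℝ → ℝ) (φ ψ : ℕ → Polynomial ℝ) (ρ : ℕ → ℝ) (x y : ℝ) :
    lancaster f₁ f₂ φ ψ ρ x y = lancaster f₂ f₁ ψ φ ρ y x := by
  simp only [lancaster, mul_comm (f₁ x), mul_right_comm (ρ _)]

theorem lancaster_eq_mul_one_add_sum (hρ : ∀ n, N < n → ρ n = 0) (x y : ℝ) :
    lancaster f₁ f₂ φ ψ ρ x y =
      f₁ x * f₂ y * (1 + ∑ k ∈ Finset.Icc 1 N, ρ k * (φ k).eval x * (ψ k).eval y) := by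
  rw [lancaster, tsum_eq_sum (s := Finset.range N) fun n hn => by
      rw [hρ (n + 1) (by simpa using hn), zero_mul, zero_mul],
    Finset.range_eq_Ico, Finset.sum_Ico_add' (fun k => ρ k * (φ k).eval x * (ψ k).eval y),
    zero_add, Finset.Ico_add_one_right_eq_Icc]

theorem lancaster_eq_add_sum (hρ : ∀ n, N < n → ρ n = 0) (x y : ℝ) :
    lancaster f₁ f₂ φ ψ ρ x y = f₁ x * f₂ y +
      ∑ k ∈ Finset.Icc 1 N, ρ k * ((φ k).eval x * f₁ x) * ((ψ k).eval y * f₂ y) := by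
  rw [lancaster_eq_mul_one_add_sum hρ, mul_add, mul_one, Finset.mul_sum]
  exact congrArg _ (Finset.sum_congr rfl fun k _ => by ring)

theorem lancaster_nonneg (hf₁ : IsDensityOn f₁ α₁ ω₁) (hf₂ : IsDensityOn f₂ α₂ ω₂)
    (hρ : ∀ n, N < n → ρ n = 0) {c d : ℕ → ℝ}
    (hc : ∀ k, ∀ x ∈ Set.Icc α₁ ω₁, |(φ k).eval x| ≤ c k)
    (hd : ∀ k, ∀ y ∈ Set.Icc α₂ ω₂, |(ψ k).eval y| ≤ d k)
    (hsum : ∑ k ∈ Finset.Icc 1 N, |ρ k| * c k * d k ≤ 1) (x y : ℝ) :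
    0 ≤ lancaster f₁ f₂ φ ψ ρ x y := by
  rw [lancaster_eq_mul_one_add_sum hρ]
  by_cases hx : x ∈ Set.Icc α₁ ω₁
  swap; · simp [hf₁.2.1 x hx]
  by_cases hy : y ∈ Set.Icc α₂ ω₂
  swap; · simp [hf₂.2.1 y hy]
  refine mul_nonneg (mul_nonneg (hf₁.1 x) (hf₂.1 y)) ?_
  have hbound : |∑ k ∈ Finset.Icc 1 N, ρ k * (φ k).eval x * (ψ k).eval y| ≤ 1 := by
    refine (Finset.abs_sum_le_sum_abs _ _).trans ((Finset.sum_le_sum fun k _ => ?_).trans hsum)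
    rw [abs_mul, abs_mul]
    have hck : 0 ≤ c k := (abs_nonneg _).trans (hc k x hx)
    gcongr
    exacts [hc k x hx, hd k y hy]
  linarith [neg_abs_le (∑ k ∈ Finset.Icc 1 N, ρ k * (φ k).eval x * (ψ k).eval y)]

theorem measurable_lancaster (hm₁ : Measurable f₁) (hm₂ : Measurable f₂)
    (hρ : ∀ n, N < n → ρ n = 0) :
    Measurable fun p : ℝ × ℝ => lancaster f₁ f₂ φ ψ ρ p.1 p.2 := by
  simp_rw [lancaster_eq_mul_one_add_sum hρ]
  fun_prop

theorem integrable_lancaster_right (hf₂ : IsDensityOn f₂ α₂ ω₂) (hm₂ : Measurable f₂)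
    (hψ : OrthonormalPolys f₂ ψ) (hρ : ∀ n, N < n → ρ n = 0) (x : ℝ) :
    Integrable fun y => lancaster f₁ f₂ φ ψ ρ x y := by
  simp_rw [lancaster_eq_add_sum hρ]
  exact (hf₂.integrable.const_mul _).add
    (integrable_finsetSum _ fun k _ => (hψ.integrable_eval_mul hf₂ hm₂ k).const_mul _)

theorem integral_lancaster_right (hf₂ : IsDensityOn f₂ α₂ ω₂) (hm₂ : Measurable f₂)
    (hψ : OrthonormalPolys f₂ ψ) (hρ : ∀ n, N < n → ρ n = 0) (x : ℝ) :
    ∫ y, lancaster f₁ f₂ φ ψ ρ x y = f₁ x := by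
  have hint : ∀ k, Integrable fun y => ρ k * ((φ k).eval x * f₁ x) * ((ψ k).eval y * f₂ y) :=
    fun k => (hψ.integrable_eval_mul hf₂ hm₂ k).const_mul _
  simp_rw [lancaster_eq_add_sum hρ]
  rw [integral_add (hf₂.integrable.const_mul _) (integrable_finsetSum _ fun k _ => hint k),
    integral_finsetSum _ fun k _ => hint k, integral_const_mul, hf₂.2.2, mul_one,
    Finset.sum_eq_zero fun k hk => ?_, add_zero]
  rw [integral_const_mul,
    hψ.integral_eval_mul_eq_zero hf₂ hm₂ (Nat.one_le_iff_ne_zero.1 (Finset.mem_Icc.1 hk).1),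
    mul_zero]

theorem integrable_lancaster_left (hf₁ : IsDensityOn f₁ α₁ ω₁) (hm₁ : Measurable f₁)
    (hφ : OrthonormalPolys f₁ φ) (hρ : ∀ n, N < n → ρ n = 0) (y : ℝ) :
    Integrable fun x => lancaster f₁ f₂ φ ψ ρ x y := by
  simp_rw [lancaster_comm f₁]
  exact integrable_lancaster_right hf₁ hm₁ hφ hρ y

theorem integral_lancaster_left (hf₁ : IsDensityOn f₁ α₁ ω₁) (hm₁ : Measurable f₁)
    (hφ : OrthonormalPolys f₁ φ) (hρ : ∀ n, N < n → ρ n = 0) (y : ℝ) :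
    ∫ x, lancaster f₁ f₂ φ ψ ρ x y = f₂ y := by
  simp_rw [lancaster_comm f₁]
  exact integral_lancaster_right hf₁ hm₁ hφ hρ y

theorem integral_mul_withDensity_lancaster (hf₁ : IsDensityOn f₁ α₁ ω₁)
    (hf₂ : IsDensityOn f₂ α₂ ω₂) (hm₁ : Measurable f₁) (hm₂ : Measurable f₂)
    (hφ : OrthonormalPolys f₁ φ) (hψ : OrthonormalPolys f₂ ψ) (hρ : ∀ n, N < n → ρ n = 0)
    (h0 : ∀ x y, 0 ≤ lancaster f₁ f₂ φ ψ ρ x y) {g₁ g₂ : ℝ → ℝ}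
    (hq₁ : MemLp g₁ 2 (densityMeasure f₁)) (hq₂ : MemLp g₂ 2 (densityMeasure f₂)) :
    ∫ p : ℝ × ℝ, g₁ p.1 * g₂ p.2 ∂(volume.withDensity fun p =>
        ENNReal.ofReal (lancaster f₁ f₂ φ ψ ρ p.1 p.2)) =
      (∫ x, g₁ x ∂densityMeasure f₁) * (∫ y, g₂ y ∂densityMeasure f₂) +
        ∑ k ∈ Finset.Icc 1 N, ρ k * ((∫ x, g₁ x * (φ k).eval x ∂densityMeasure f₁) *
          ∫ y, g₂ y * (ψ k).eval y ∂densityMeasure f₂) := by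
  have : IsProbabilityMeasure (densityMeasure f₁) := hf₁.isProbabilityMeasure
  have : IsProbabilityMeasure (densityMeasure f₂) := hf₂.isProbabilityMeasure
  have hI₁ : Integrable fun x => g₁ x * f₁ x :=
    (integrable_densityMeasure_iff hm₁ hf₁.1).1 (hq₁.integrable one_le_two)
  have hI₂ : Integrable fun y => g₂ y * f₂ y :=
    (integrable_densityMeasure_iff hm₂ hf₂.1).1 (hq₂.integrable one_le_two)
  have hIk : ∀ k, Integrable (fun p : ℝ × ℝ => ρ k * ((g₁ p.1 * (φ k).eval p.1 * f₁ p.1) *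
      (g₂ p.2 * (ψ k).eval p.2 * f₂ p.2))) (volume.prod volume) := fun k =>
    ((hφ.integrable_mul_eval_mul hf₁ hm₁ hq₁ k).mul_prod
      (hψ.integrable_mul_eval_mul hf₂ hm₂ hq₂ k)).const_mul _
  rw [integral_withDensity_eq_integral_toReal_smul
    (measurable_lancaster hm₁ hm₂ hρ).ennreal_ofReal (ae_of_all _ fun _ => ENNReal.ofReal_lt_top)]
  simp_rw [ENNReal.toReal_ofReal (h0 _ _), smul_eq_mul, lancaster_eq_add_sum hρ, add_mul,
    Finset.sum_mul, Measure.volume_eq_prod]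
  have hsplit : ∀ p : ℝ × ℝ, f₁ p.1 * f₂ p.2 * (g₁ p.1 * g₂ p.2) +
      ∑ k ∈ Finset.Icc 1 N, ρ k * ((φ k).eval p.1 * f₁ p.1) * ((ψ k).eval p.2 * f₂ p.2) *
        (g₁ p.1 * g₂ p.2) =
      g₁ p.1 * f₁ p.1 * (g₂ p.2 * f₂ p.2) + ∑ k ∈ Finset.Icc 1 N, ρ k *
        ((g₁ p.1 * (φ k).eval p.1 * f₁ p.1) * (g₂ p.2 * (ψ k).eval p.2 * f₂ p.2)) := fun p => by
    congr 1
    · ring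
    · exact Finset.sum_congr rfl fun k _ => by ring
  simp_rw [hsplit]
  rw [integral_add (hI₁.mul_prod hI₂) (integrable_finsetSum _ fun k _ => hIk k),
    integral_finsetSum _ fun k _ => hIk k,
    integral_prod_mul (fun x => g₁ x * f₁ x) fun y => g₂ y * f₂ y,
    integral_densityMeasure hm₁ hf₁.1, integral_densityMeasure hm₂ hf₂.1]
  refine congrArg _ (Finset.sum_congr rfl fun k _ => ?_)
  rw [integral_const_mul,
    integral_prod_mul (fun x => g₁ x * (φ k).eval x * f₁ x) fun y => g₂ y * (ψ k).eval y * f₂ y,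
    integral_densityMeasure hm₁ hf₁.1, integral_densityMeasure hm₂ hf₂.1]

variable {Ω : Type*} [MeasurableSpace Ω] {μ : Measure Ω} {X Y : Ω → ℝ}

theorem map_fst_eq_densityMeasure_of_map_eq_lancaster (hX : Measurable X) (hY : Measurable Y)
    (hf₂ : IsDensityOn f₂ α₂ ω₂) (hm₁ : Measurable f₁) (hm₂ : Measurable f₂)
    (hψ : OrthonormalPolys f₂ ψ) (hρ : ∀ n, N < n → ρ n = 0)
    (h0 : ∀ x y, 0 ≤ lancaster f₁ f₂ φ ψ ρ x y)
    (hjoint : μ.map (fun ω => (X ω, Y ω)) =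
      volume.withDensity fun p => ENNReal.ofReal (lancaster f₁ f₂ φ ψ ρ p.1 p.2)) :
    μ.map X = densityMeasure f₁ := by
  change μ.map (Prod.fst ∘ fun ω => (X ω, Y ω)) = _
  rw [← Measure.map_map measurable_fst (hX.prodMk hY), hjoint]
  exact map_fst_withDensity_ofReal (measurable_lancaster hm₁ hm₂ hρ) (fun p => h0 p.1 p.2)
    (integrable_lancaster_right hf₂ hm₂ hψ hρ) (integral_lancaster_right hf₂ hm₂ hψ hρ)

theorem map_snd_eq_densityMeasure_of_map_eq_lancaster (hX : Measurable X) (hY : Measurable Y)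
    (hf₁ : IsDensityOn f₁ α₁ ω₁) (hm₁ : Measurable f₁) (hm₂ : Measurable f₂)
    (hφ : OrthonormalPolys f₁ φ) (hρ : ∀ n, N < n → ρ n = 0)
    (h0 : ∀ x y, 0 ≤ lancaster f₁ f₂ φ ψ ρ x y)
    (hjoint : μ.map (fun ω => (X ω, Y ω)) =
      volume.withDensity fun p => ENNReal.ofReal (lancaster f₁ f₂ φ ψ ρ p.1 p.2)) :
    μ.map Y = densityMeasure f₂ := by
  change μ.map (Prod.snd ∘ fun ω => (X ω, Y ω)) = _
  rw [← Measure.map_map measurable_snd (hX.prodMk hY), hjoint]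
  exact map_snd_withDensity_ofReal (measurable_lancaster hm₁ hm₂ hρ) (fun p => h0 p.1 p.2)
    (integrable_lancaster_left hf₁ hm₁ hφ hρ) (integral_lancaster_left hf₁ hm₁ hφ hρ)

theorem hasLancasterExpansion_of_map_eq_lancaster (hX : Measurable X) (hY : Measurable Y)
    (hf₁ : IsDensityOn f₁ α₁ ω₁) (hf₂ : IsDensityOn f₂ α₂ ω₂) (hm₁ : Measurable f₁)
    (hm₂ : Measurable f₂) (hφ : OrthonormalPolys f₁ φ) (hψ : OrthonormalPolys f₂ ψ)
    (hρ : ∀ n, N < n → ρ n = 0) (h0 : ∀ x y, 0 ≤ lancaster f₁ f₂ φ ψ ρ x y)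
    (hjoint : μ.map (fun ω => (X ω, Y ω)) =
      volume.withDensity fun p => ENNReal.ofReal (lancaster f₁ f₂ φ ψ ρ p.1 p.2)) :
    HasLancasterExpansion μ X Y (fun n x => (φ n).eval x) (fun n y => (ψ n).eval y)
      (Finset.Icc 1 N) ρ := by
  refine ⟨hX, hY, fun g₁ g₂ hg₁ hg₂ hq₁ hq₂ => ?_⟩
  rw [map_fst_eq_densityMeasure_of_map_eq_lancaster hX hY hf₂ hm₁ hm₂ hψ hρ h0 hjoint] at hq₁ ⊢
  rw [map_snd_eq_densityMeasure_of_map_eq_lancaster hX hY hf₁ hm₁ hm₂ hφ hρ h0 hjoint] at hq₂ ⊢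
  rw [← integral_mul_withDensity_lancaster hf₁ hf₂ hm₁ hm₂ hφ hψ hρ h0 hq₁ hq₂, ← hjoint]
  exact (integral_map (hX.prodMk hY).aemeasurable
    (by fun_prop : Measurable fun p : ℝ × ℝ => g₁ p.1 * g₂ p.2).aestronglyMeasurable).symm

end Lancaster

theorem sum_abs_mul_mul_le_one {N : ℕ} {c d ρ : ℕ → ℝ} {lam : ℝ} (hlam : 0 < lam)
    (hlam' : lam ≤ (∑ n ∈ Finset.Icc 1 N, (n : ℝ) * c n * d n)⁻¹)
    (hρ : ∀ k ∈ Finset.Icc 1 N, ρ k = lam * k) :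
    ∑ k ∈ Finset.Icc 1 N, |ρ k| * c k * d k ≤ 1 := by
  set S := ∑ n ∈ Finset.Icc 1 N, (n : ℝ) * c n * d n
  have hS : 0 < S := inv_pos.1 (hlam.trans_le hlam')
  calc ∑ k ∈ Finset.Icc 1 N, |ρ k| * c k * d k = lam * S := by
        rw [Finset.mul_sum]
        refine Finset.sum_congr rfl fun k hk => ?_
        rw [hρ k hk, abs_of_nonneg (by positivity)]
        ring
    _ ≤ S⁻¹ * S := mul_le_mul_of_nonneg_right hlam' hS.le
    _ = 1 := inv_mul_cancel₀ hS.ne'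

theorem stmt19_general {Ω : Type*} [MeasurableSpace Ω] (μ : Measure Ω) [IsProbabilityMeasure μ]
    (X Y : Ω → ℝ) (hX : Measurable X) (hY : Measurable Y)
    (α₁ ω₁ α₂ ω₂ : ℝ)
    (f₁ f₂ : ℝ → ℝ) (hf₁ : IsDensityOn f₁ α₁ ω₁) (hf₂ : IsDensityOn f₂ α₂ ω₂)
    (hm₁ : Measurable f₁) (hm₂ : Measurable f₂)
    (φ ψ : ℕ → Polynomial ℝ)
    (hφ : OrthonormalPolys f₁ φ) (hψ : OrthonormalPolys f₂ ψ)
    (c d : ℕ → ℝ)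
    (hc : ∀ n, c n = sSup ((fun x => |(φ n).eval x|) '' Set.Icc α₁ ω₁))
    (hd : ∀ n, d n = sSup ((fun y => |(ψ n).eval y|) '' Set.Icc α₂ ω₂))
    (N : ℕ) (hN : 2 ≤ N) (lam : ℝ) (hlam : 0 < lam)
    (hlam' : lam ≤ (∑ n ∈ Finset.Icc 1 N, (n : ℝ) * c n * d n)⁻¹)
    (ρ : ℕ → ℝ) (hρ₁ : ∀ n, 1 ≤ n → n ≤ N → ρ n = lam * n)
    (hρ₂ : ∀ n, N < n → ρ n = 0)
    (hjoint : Measure.map (fun ω => (X ω, Y ω)) μ =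
      (volume : Measure (ℝ × ℝ)).withDensity
        (fun p => ENNReal.ofReal (lancaster f₁ f₂ φ ψ ρ p.1 p.2))) :
    maxCorr μ X Y = lam * N ∧
    |pearson μ X Y| = lam ∧
    lam < lam * N ∧ 0 < lam := by
  have hρ : ∀ k ∈ Finset.Icc 1 N, ρ k = lam * k := fun k hk =>
    hρ₁ k (Finset.mem_Icc.1 hk).1 (Finset.mem_Icc.1 hk).2
  have h0 : ∀ x y, 0 ≤ lancaster f₁ f₂ φ ψ ρ x y :=
    lancaster_nonneg hf₁ hf₂ hρ₂ (fun k x hx => hc k ▸ abs_eval_le_sSup_image _ hx)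
      (fun k y hy => hd k ▸ abs_eval_le_sSup_image _ hy) (sum_abs_mul_mul_le_one hlam hlam' hρ)
  have H := hasLancasterExpansion_of_map_eq_lancaster hX hY hf₁ hf₂ hm₁ hm₂ hφ hψ hρ₂ h0 hjoint
  have hX₁ := map_fst_eq_densityMeasure_of_map_eq_lancaster hX hY hf₂ hm₁ hm₂ hψ hρ₂ h0 hjoint
  have hY₂ := map_snd_eq_densityMeasure_of_map_eq_lancaster hX hY hf₁ hm₁ hm₂ hφ hρ₂ h0 hjoint
  have he₁ := hX₁ ▸ hφ.isOrthonormalL2 hf₁ hm₁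
  have he₂ := hY₂ ▸ hψ.isOrthonormalL2 hf₂ hm₂
  have h1N : 1 ∈ Finset.Icc 1 N := Finset.mem_Icc.2 ⟨le_rfl, by omega⟩
  have hNN : N ∈ Finset.Icc 1 N := Finset.mem_Icc.2 ⟨by omega, le_rfl⟩
  have hpearson : pearson μ X Y = lam := by
    simpa [hρ 1 h1N] using H.pearson_comp_eq he₁ he₂ h1N measurable_id measurable_id
      (inv_pos.2 (hφ.2.1 1)) (inv_pos.2 (hψ.2.1 1))
      (hX₁ ▸ hφ.sub_integral_eq hf₁ hm₁) (hY₂ ▸ hψ.sub_integral_eq hf₂ hm₂)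
  refine ⟨H.maxCorr_eq he₁ he₂ (by positivity) (fun k hk => ?_) hNN (hρ N hNN)
      (by fun_prop) (by fun_prop) (hX₁ ▸ hφ.integral_eval_eq_zero hf₁ hm₁ (by omega))
      (hY₂ ▸ hψ.integral_eval_eq_zero hf₂ hm₂ (by omega)),
    by rw [hpearson, abs_of_pos hlam], lt_mul_of_one_lt_right hlam (by exact_mod_cast hN), hlam⟩
  rw [hρ k hk, abs_of_nonneg (by positivity)]
  gcongr
  exact_mod_cast (Finset.mem_Icc.1 hk).2

/-- For the Lancaster density with `ρₙ = λ n` for `1 ≤ n ≤ N` (`N ≥ 2`), `ρₙ = 0` for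
`n > N`, and `0 < λ ≤ (Σ_{n=1}^N n cₙ dₙ)⁻¹`:
`R(X,Y) = λN > λ = |ρ(X,Y)| > 0`. -/
theorem stmt19 {Ω : Type*} [MeasurableSpace Ω] (μ : Measure Ω) [IsProbabilityMeasure μ]
    (X Y : Ω → ℝ) (hX : Measurable X) (hY : Measurable Y)
    (α₁ ω₁ α₂ ω₂ : ℝ) (h₁ : α₁ < ω₁) (h₂ : α₂ < ω₂)
    (f₁ f₂ : ℝ → ℝ) (hf₁ : IsDensityOn f₁ α₁ ω₁) (hf₂ : IsDensityOn f₂ α₂ ω₂)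
    (hm₁ : Measurable f₁) (hm₂ : Measurable f₂)
    (φ ψ : ℕ → Polynomial ℝ)
    (hφ : OrthonormalPolys f₁ φ) (hψ : OrthonormalPolys f₂ ψ)
    (c d : ℕ → ℝ)
    (hc : ∀ n, c n = sSup ((fun x => |(φ n).eval x|) '' Set.Icc α₁ ω₁))
    (hd : ∀ n, d n = sSup ((fun y => |(ψ n).eval y|) '' Set.Icc α₂ ω₂))
    (N : ℕ) (hN : 2 ≤ N) (lam : ℝ) (hlam : 0 < lam)
    (hlam' : lam ≤ (∑ n ∈ Finset.Icc 1 N, (n : ℝ) * c n * d n)⁻¹)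
    (ρ : ℕ → ℝ) (hρ₁ : ∀ n, 1 ≤ n → n ≤ N → ρ n = lam * n)
    (hρ₂ : ∀ n, N < n → ρ n = 0)
    (hjoint : Measure.map (fun ω => (X ω, Y ω)) μ =
      (volume : Measure (ℝ × ℝ)).withDensity
        (fun p => ENNReal.ofReal (lancaster f₁ f₂ φ ψ ρ p.1 p.2))) :
    maxCorr μ X Y = lam * N ∧
    |pearson μ X Y| = lam ∧
    lam < lam * N ∧ 0 < lam :=
  stmt19_general μ X Y hX hY α₁ ω₁ α₂ ω₂ f₁ f₂ hf₁ hf₂ hm₁ hm₂ φ ψ hφ hψ c d hc hd N hN lam hlam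
    hlam' ρ hρ₁ hρ₂ hjoint
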